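/- arXiv:2507.09444 — 6 statements merged into one kernel-verified Lean document; each statement's English description precedes it below -/
import Mathlib

section
/- Let g be an increasing convex distortion function and α ∈ [0,1). Then for all x, y ∈ ℝⁿ, ⟨⟨x + y⟩⟩_α^{S,g} ≤ ⟨⟨x⟩⟩_α^{S,g} + ⟨⟨y⟩⟩_α^{S,g} (triangle inequality for the scaled generalized-ES norm). -/
open Finset

/-- The absolute values of the components of `x`, arranged in increasing order:
`absSorted x i` is `|x|_(i+1)` in the paper's notation. -/
noncomputable def absSorted {n : ℕ} (x : Fin n → ℝ) : Fin n → ℝ :=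
  fun i => |x (Tuple.sort (fun j => |x j|) i)|

/-- `coeff n g i = g((i+1)/n) - g(i/n)`, the paper's `c_{i+1}`. -/
noncomputable def coeff (n : ℕ) (g : ℝ → ℝ) (i : Fin n) : ℝ :=
  g (((i : ℕ) + 1 : ℝ) / n) - g (((i : ℕ) : ℝ) / n)

/-- The objective function whose infimum over `t` defines the scaled generalized-ES norm. -/
noncomputable def sgesObj {n : ℕ} (g : ℝ → ℝ) (α : ℝ) (x : Fin n → ℝ) (t : ℝ) : ℝ :=
  t + (1 - α)⁻¹ * ∑ i, coeff n g i * max (absSorted x i - t) 0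

/-- The scaled generalized-ES norm `⟨⟨x⟩⟩_α^{S,g}`. -/
noncomputable def sges {n : ℕ} (g : ℝ → ℝ) (α : ℝ) (x : Fin n → ℝ) : ℝ :=
  ⨅ t : ℝ, sgesObj g α x t

/-- The non-scaled generalized-ES norm `⟨⟨x⟩⟩_α^{g} = n(1-α)⟨⟨x⟩⟩_α^{S,g}`. -/
noncomputable def nges {n : ℕ} (g : ℝ → ℝ) (α : ℝ) (x : Fin n → ℝ) : ℝ :=
  (n : ℝ) * (1 - α) * sges g α x

/-- The dual norm of a (norm) functional `N` on `ℝⁿ`. -/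
noncomputable def dualNorm {n : ℕ} (N : (Fin n → ℝ) → ℝ) (y : Fin n → ℝ) : ℝ :=
  sSup {r : ℝ | ∃ x : Fin n → ℝ, N x ≤ 1 ∧ r = ∑ i, x i * y i}

/-- The ordered weighted L1 (OWL) norm. -/
noncomputable def owl {n : ℕ} (w : Fin n → ℝ) (x : Fin n → ℝ) : ℝ :=
  ∑ i, w i * absSorted x i

/- ---------- auxiliary lemmas ---------- -/

lemma absSorted_mono {n : ℕ} (x : Fin n → ℝ) : Monotone (absSorted x) :=
  Tuple.monotone_sort (fun j => |x j|)

lemma coeff_nonneg {n : ℕ} (hn : 1 ≤ n) {g : ℝ → ℝ}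
    (hg_mono : MonotoneOn g (Set.Icc 0 1)) (i : Fin n) : 0 ≤ coeff n g i := by
  have hn' : (0:ℝ) < n := by exact_mod_cast Nat.lt_of_lt_of_le Nat.zero_lt_one hn
  have hi : ((i : ℕ) : ℝ) + 1 ≤ n := by exact_mod_cast i.is_lt
  have h1 : ((i : ℕ) : ℝ) / n ∈ Set.Icc (0:ℝ) 1 :=
    ⟨by positivity, by rw [div_le_one hn']; linarith⟩
  have h2 : (((i : ℕ) : ℝ) + 1) / n ∈ Set.Icc (0:ℝ) 1 :=
    ⟨by positivity, by rw [div_le_one hn']; linarith⟩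
  have hle : ((i : ℕ) : ℝ) / n ≤ (((i : ℕ) : ℝ) + 1) / n := by
    gcongr
    linarith
  have := hg_mono h1 h2 hle
  simpa [coeff] using this

lemma coeff_mono {n : ℕ} (hn : 1 ≤ n) {g : ℝ → ℝ}
    (hg_conv : ConvexOn ℝ (Set.Icc 0 1) g) : Monotone (coeff n g) := by
  intro i j hij
  rcases eq_or_lt_of_le hij with h | h
  · rw [h]
  · have hn' : (0:ℝ) < n := by exact_mod_cast Nat.lt_of_lt_of_le Nat.zero_lt_one hn
    set a : ℝ := ((i : ℕ) : ℝ) / n with ha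
    set b : ℝ := (((i : ℕ) : ℝ) + 1) / n with hb
    set c : ℝ := ((j : ℕ) : ℝ) / n with hc
    set d : ℝ := (((j : ℕ) : ℝ) + 1) / n with hd
    have hji : ((i : ℕ) : ℝ) + 1 ≤ ((j : ℕ) : ℝ) := by exact_mod_cast h
    have hjn : ((j : ℕ) : ℝ) + 1 ≤ n := by exact_mod_cast j.is_lt
    have hamem : a ∈ Set.Icc (0:ℝ) 1 :=
      ⟨by positivity, by rw [ha, div_le_one hn']; linarith⟩
    have hdmem : d ∈ Set.Icc (0:ℝ) 1 :=
      ⟨by positivity, by rw [hd, div_le_one hn']; linarith⟩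
    have hab : a ≤ b := by rw [ha, hb, div_le_div_iff_of_pos_right hn']; linarith
    have hbd : b ≤ d := by rw [hb, hd, div_le_div_iff_of_pos_right hn']; linarith
    have had : a < d := by
      rw [ha, hd, div_lt_div_iff_of_pos_right hn']; linarith
    have hda : d - a ≠ 0 := ne_of_gt (by linarith)
    have hbcad : b + c = a + d := by
      rw [ha, hb, hc, hd]
      field_simp
      ring
    set lam : ℝ := (d - b) / (d - a) with hlam
    have hlam0 : 0 ≤ lam := by
      apply div_nonneg <;> linarith
    have hlam1 : lam ≤ 1 := by
      rw [hlam, div_le_one (by linarith : (0:ℝ) < d - a)]; linarith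
    have hlam_mul : lam * (d - a) = d - b := div_mul_cancel₀ _ hda
    have hbcomb : lam * a + (1 - lam) * d = b := by
      linear_combination -hlam_mul
    have hccomb : (1 - lam) * a + lam * d = c := by
      linear_combination hlam_mul - hbcad
    have h1 := hg_conv.2 hamem hdmem hlam0 (by linarith : (0:ℝ) ≤ 1 - lam)
      (by ring : lam + (1 - lam) = 1)
    have h2 := hg_conv.2 hamem hdmem (by linarith : (0:ℝ) ≤ 1 - lam) hlam0
      (by ring : (1 - lam) + lam = 1)
    rw [smul_eq_mul, smul_eq_mul, smul_eq_mul, smul_eq_mul, hbcomb] at h1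
    rw [smul_eq_mul, smul_eq_mul, smul_eq_mul, smul_eq_mul, hccomb] at h2
    show g b - g a ≤ g d - g c
    linarith

lemma sum_coeff {n : ℕ} (hn : 1 ≤ n) {g : ℝ → ℝ} (hg0 : g 0 = 0) (hg1 : g 1 = 1) :
    ∑ i : Fin n, coeff n g i = 1 := by
  have hn' : (0:ℝ) < n := by exact_mod_cast Nat.lt_of_lt_of_le Nat.zero_lt_one hn
  have key : ∀ i : Fin n, coeff n g i
      = g (((((i:ℕ)+1 : ℕ)):ℝ) / n) - g ((((i:ℕ) : ℕ):ℝ) / n) := by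
    intro i
    have hcast : (((i:ℕ):ℝ) + 1) = ((((i:ℕ)+1 : ℕ)):ℝ) := by push_cast; ring
    simp only [coeff, hcast]
  calc ∑ i : Fin n, coeff n g i
      = ∑ i : Fin n, (g (((((i:ℕ)+1 : ℕ)):ℝ) / n) - g ((((i:ℕ) : ℕ):ℝ) / n)) :=
        Finset.sum_congr rfl fun i _ => key i
    _ = ∑ k ∈ Finset.range n, (g ((((k+1 : ℕ)):ℝ) / n) - g (((k : ℕ):ℝ) / n)) :=
        Fin.sum_univ_eq_sum_range (fun k : ℕ => g ((((k+1 : ℕ)):ℝ) / n) - g (((k : ℕ):ℝ) / n)) n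
    _ = g (((n:ℕ):ℝ) / n) - g (((0:ℕ):ℝ) / n) :=
        Finset.sum_range_sub (fun m : ℕ => g (((m : ℕ):ℝ) / n)) n
    _ = 1 := by
        rw [Nat.cast_zero, zero_div, div_self (ne_of_gt hn'), hg0, hg1]; ring

lemma sgesObj_nonneg {n : ℕ} (hn : 1 ≤ n) {g : ℝ → ℝ}
    (hg_mono : MonotoneOn g (Set.Icc 0 1)) (hg0 : g 0 = 0) (hg1 : g 1 = 1)
    {α : ℝ} (hα : α ∈ Set.Ico (0 : ℝ) 1) (x : Fin n → ℝ) (t : ℝ) :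
    0 ≤ sgesObj g α x t := by
  obtain ⟨hα0, hα1⟩ := hα
  have hc0 := coeff_nonneg hn hg_mono (g := g)
  set S := ∑ i, coeff n g i * max (absSorted x i - t) 0 with hS
  have hS0 : 0 ≤ S :=
    Finset.sum_nonneg fun i _ => mul_nonneg (hc0 i) (le_max_right _ _)
  have hS1 : ∑ i, coeff n g i * (absSorted x i - t) ≤ S :=
    Finset.sum_le_sum fun i _ =>
      mul_le_mul_of_nonneg_left (le_max_left _ _) (hc0 i)
  have hexp : ∑ i, coeff n g i * (absSorted x i - t)
      = (∑ i, coeff n g i * absSorted x i) - t := by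
    simp only [mul_sub]
    rw [Finset.sum_sub_distrib, ← Finset.sum_mul, sum_coeff hn hg0 hg1, one_mul]
  have hca : 0 ≤ ∑ i, coeff n g i * absSorted x i :=
    Finset.sum_nonneg fun i _ => mul_nonneg (hc0 i) (abs_nonneg _)
  have hinv : 1 ≤ (1 - α)⁻¹ := by
    rw [le_inv_comm₀ one_pos (by linarith)]
    simp; linarith
  have hSS : S ≤ (1 - α)⁻¹ * S := le_mul_of_one_le_left hS0 hinv
  simp only [sgesObj]
  rw [← hS]
  linarith

/-- triangle inequality of the scaled generalized-ES norm for an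
increasing convex distortion function. -/
theorem stmt2 (n : ℕ) (hn : 1 ≤ n) (g : ℝ → ℝ)
    (hg_mono : MonotoneOn g (Set.Icc 0 1)) (hg_conv : ConvexOn ℝ (Set.Icc 0 1) g)
    (hg0 : g 0 = 0) (hg1 : g 1 = 1)
    (α : ℝ) (hα : α ∈ Set.Ico (0 : ℝ) 1) (x y : Fin n → ℝ) :
    sges g α (x + y) ≤ sges g α x + sges g α y := by
  obtain ⟨hα0, hα1⟩ := hα
  have hinv_pos : (0:ℝ) < (1 - α)⁻¹ := inv_pos.2 (by linarith)
  have hc0 := coeff_nonneg hn hg_mono (g := g)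
  have hcmono := coeff_mono hn hg_conv (g := g)
  -- rearrangement step
  have key : ∀ (z : Fin n → ℝ) (σ : Equiv.Perm (Fin n)) (s : ℝ),
      ∑ i, coeff n g i * max (|z (σ i)| - s) 0
        ≤ ∑ i, coeff n g i * max (absSorted z i - s) 0 := by
    intro z σ s
    set h : Fin n → ℝ := fun i => max (absSorted z i - s) 0 with hh_def
    have hh : Monotone h := fun i j hij =>
      max_le_max (sub_le_sub_right (absSorted_mono z hij) s) le_rfl
    have hmv : Monovary (coeff n g) h := hcmono.monovary hh
    set π : Equiv.Perm (Fin n) := σ.trans (Tuple.sort (fun j => |z j|))⁻¹ with hπ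
    have heq : ∀ i, max (|z (σ i)| - s) 0 = h (π i) := by
      intro i
      simp [hh_def, hπ, absSorted]
    simp_rw [heq]
    exact hmv.sum_mul_comp_perm_le_sum_mul (σ := π)
  -- core pointwise inequality
  have core : ∀ s t : ℝ,
      sgesObj g α (x + y) (s + t) ≤ sgesObj g α x s + sgesObj g α y t := by
    intro s t
    set τ := Tuple.sort (fun j => |(x + y) j|) with hτ
    have step1 : ∑ i, coeff n g i * max (absSorted (x + y) i - (s + t)) 0
        ≤ (∑ i, coeff n g i * max (|x (τ i)| - s) 0)
          + ∑ i, coeff n g i * max (|y (τ i)| - t) 0 := by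
      rw [← Finset.sum_add_distrib]
      apply Finset.sum_le_sum
      intro i _
      rw [← mul_add]
      apply mul_le_mul_of_nonneg_left ?_ (hc0 i)
      have hzz : absSorted (x + y) i = |x (τ i) + y (τ i)| := rfl
      rw [hzz]
      have habs : |x (τ i) + y (τ i)| ≤ |x (τ i)| + |y (τ i)| := abs_add_le _ _
      apply max_le
      · have h1 : |x (τ i)| - s ≤ max (|x (τ i)| - s) 0 := le_max_left _ _
        have h2 : |y (τ i)| - t ≤ max (|y (τ i)| - t) 0 := le_max_left _ _
        linarith
      · exact add_nonneg (le_max_right _ _) (le_max_right _ _)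
    have step2 : ∑ i, coeff n g i * max (|x (τ i)| - s) 0
        ≤ ∑ i, coeff n g i * max (absSorted x i - s) 0 := key x τ s
    have step3 : ∑ i, coeff n g i * max (|y (τ i)| - t) 0
        ≤ ∑ i, coeff n g i * max (absSorted y i - t) 0 := key y τ t
    simp only [sgesObj]
    have := mul_le_mul_of_nonneg_left
      (le_trans step1 (add_le_add step2 step3)) hinv_pos.le
    rw [mul_add] at this
    linarith
  -- infimum manipulation
  have hbdd : ∀ z : Fin n → ℝ, BddBelow (Set.range (sgesObj g α z)) := by
    intro z
    refine ⟨0, ?_⟩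
    rintro _ ⟨t, rfl⟩
    exact sgesObj_nonneg hn hg_mono hg0 hg1 ⟨hα0, hα1⟩ z t
  have h1 : ∀ s t : ℝ, sges g α (x + y) ≤ sgesObj g α x s + sgesObj g α y t :=
    fun s t => le_trans (ciInf_le (hbdd _) (s + t)) (core s t)
  have h2 : ∀ t : ℝ, sges g α (x + y) - sgesObj g α y t ≤ sges g α x :=
    fun t => le_ciInf fun s => by linarith [h1 s t]
  have h3 : sges g α (x + y) - sges g α x ≤ sges g α y :=
    le_ciInf fun t => by linarith [h2 t]
  linarith
end

section
/- Let g be a continuous distortion function and set α_j = g(j/n) for j = 0,…,n. Then for every j = 0,…,n−1 with α_j < 1 and every x ∈ ℝⁿ, the non-scaled generalized-ES norm satisfies ⟨⟨x⟩⟩_{α_j}^{g} = n Σ_{i=j+1}^n c_i |x|_(i), where c_i = α_i − α_{i−1}. -/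
open Finset

/-- at the grid points `α_j = g(j/n)`, `j = 0,…,n-1`, with `α_j < 1`,
the non-scaled generalized-ES norm equals `n ∑_{i=j+1}^n cᵢ |x|₍ᵢ₎`
(the paper's 1-based index `i ∈ {j+1,…,n}` is the 0-based index `i ∈ {j,…,n-1}`). -/
theorem stmt10 (n : ℕ) (hn : 1 ≤ n) (g : ℝ → ℝ)
    (hg_mono : MonotoneOn g (Set.Icc 0 1)) (hg0 : g 0 = 0) (hg1 : g 1 = 1)
    (hg_cont : ContinuousOn g (Set.Icc 0 1))
    (j : ℕ) (hj : j < n) (hαj : g ((j : ℝ) / n) < 1) (x : Fin n → ℝ) :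
    nges g (g ((j : ℝ) / n)) x
      = (n : ℝ) *
          ∑ i ∈ Finset.univ.filter (fun i : Fin n => j ≤ (i : ℕ)),
            coeff n g i * absSorted x i := by
  set α := g ((j : ℝ) / n) with hα
  have hn0 : (0 : ℝ) < n := by positivity
  have h1α : (0 : ℝ) < 1 - α := by linarith
  have h1αne : (1 : ℝ) - α ≠ 0 := h1α.ne'
  set s := absSorted x with hs
  have hsmono : Monotone s := Tuple.monotone_sort (fun j => |x j|)
  -- nonnegativity of coefficients
  have hc : ∀ i : Fin n, 0 ≤ coeff n g i := by
    intro i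
    have hi : (i : ℕ) < n := i.isLt
    have h1 : ((i : ℕ) : ℝ) / n ∈ Set.Icc (0:ℝ) 1 := by
      constructor
      · positivity
      · rw [div_le_one hn0]; exact_mod_cast hi.le
    have h2 : (((i : ℕ) : ℝ) + 1) / n ∈ Set.Icc (0:ℝ) 1 := by
      constructor
      · positivity
      · rw [div_le_one hn0]
        have : ((i : ℕ) : ℝ) + 1 = (((i : ℕ) + 1 : ℕ) : ℝ) := by push_cast; ring
        rw [this]
        exact_mod_cast hi
    have := hg_mono h1 h2 ((div_le_div_iff_of_pos_right hn0).mpr (by linarith))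
    simpa [coeff] using sub_nonneg.mpr this
  set jF : Fin n := ⟨j, hj⟩ with hjF
  set sstar := s jF with hsstar
  -- sum of coefficients over the tail
  set F : ℕ → ℝ := fun k => g ((k : ℝ) / n) with hF
  have hcoeffF : ∀ i : Fin n, coeff n g i = F ((i : ℕ) + 1) - F (i : ℕ) := by
    intro i; simp only [coeff, F]; push_cast; ring_nf
  have hsum : ∑ i ∈ Finset.univ.filter (fun i : Fin n => j ≤ (i : ℕ)), coeff n g i
      = 1 - α := by
    have step1 : ∑ i ∈ Finset.univ.filter (fun i : Fin n => j ≤ (i : ℕ)), coeff n g i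
        = ∑ k ∈ (Finset.range n).filter (fun k => j ≤ k), (F (k + 1) - F k) := by
      rw [Finset.sum_filter, Finset.sum_filter,
        ← Fin.sum_univ_eq_sum_range (fun k => if j ≤ k then F (k + 1) - F k else 0) n]
      exact Finset.sum_congr rfl fun i _ => by rw [hcoeffF i]
    have step2 : (Finset.range n).filter (fun k => j ≤ k) = Finset.Ico j n := by
      ext k; simp [Finset.mem_Ico, Finset.mem_range, and_comm]
    have step3 : ∑ k ∈ Finset.Ico j n, (F (k + 1) - F k) = F n - F j := by
      rw [Finset.sum_Ico_eq_sub _ hj.le, Finset.sum_range_sub, Finset.sum_range_sub]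
      ring
    have hFn : F n = 1 := by
      simp only [F]
      rw [div_self hn0.ne']
      exact hg1
    rw [step1, step2, step3, hFn]
  -- ordering facts
  have hmaxge : ∀ i : Fin n, j ≤ (i : ℕ) → sstar ≤ s i := by
    intro i h
    exact hsmono (show jF ≤ i from h)
  have hmaxle : ∀ i : Fin n, ¬ j ≤ (i : ℕ) → s i ≤ sstar := by
    intro i h
    exact hsmono (show i ≤ jF from (not_le.mp h).le)
  -- the objective is minimized at sstar
  have hobj : ∀ t : ℝ, sgesObj g α x sstar ≤ sgesObj g α x t := by
    intro t
    have key : ∀ i : Fin n,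
        coeff n g i * max (s i - sstar) 0
          + (if j ≤ (i : ℕ) then coeff n g i * (sstar - t) else 0)
        ≤ coeff n g i * max (s i - t) 0 := by
      intro i
      by_cases h : j ≤ (i : ℕ)
      · simp only [if_pos h]
        have h1 : sstar ≤ s i := hmaxge i h
        have hm : max (s i - sstar) 0 = s i - sstar := max_eq_left (by linarith)
        rw [hm, ← mul_add]
        have he : s i - sstar + (sstar - t) = s i - t := by ring
        rw [he]
        exact mul_le_mul_of_nonneg_left (le_max_left _ _) (hc i)
      · simp only [if_neg h, add_zero]
        have h1 : s i ≤ sstar := hmaxle i h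
        have hm : max (s i - sstar) 0 = 0 := max_eq_right (by linarith)
        rw [hm, mul_zero]
        exact mul_nonneg (hc i) (le_max_right _ _)
    have hsumineq := Finset.sum_le_sum (fun i (_ : i ∈ Finset.univ) => key i)
    rw [Finset.sum_add_distrib, ← Finset.sum_filter] at hsumineq
    have h2 : ∑ i ∈ Finset.univ.filter (fun i : Fin n => j ≤ (i : ℕ)),
        coeff n g i * (sstar - t) = (1 - α) * (sstar - t) := by
      rw [← Finset.sum_mul, hsum]
    rw [h2] at hsumineq
    have hβ : (0:ℝ) ≤ (1 - α)⁻¹ := by positivity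
    have h3 := mul_le_mul_of_nonneg_left hsumineq hβ
    have h4 : (1 - α)⁻¹ * ((∑ i, coeff n g i * max (s i - sstar) 0) + (1 - α) * (sstar - t))
        = (1 - α)⁻¹ * (∑ i, coeff n g i * max (s i - sstar) 0) + (sstar - t) := by
      field_simp
    rw [h4] at h3
    simp only [sgesObj, ← hs]
    linarith
  -- infimum is attained at sstar
  have hbdd : BddBelow (Set.range (sgesObj g α x)) := by
    refine ⟨sgesObj g α x sstar, ?_⟩
    rintro r ⟨t, rfl⟩
    exact hobj t
  have hinf : sges g α x = sgesObj g α x sstar :=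
    le_antisymm (ciInf_le hbdd sstar) (le_ciInf hobj)
  -- compute the objective at sstar
  have hSstar : (∑ i, coeff n g i * max (s i - sstar) 0)
      = ∑ i ∈ Finset.univ.filter (fun i : Fin n => j ≤ (i : ℕ)),
          coeff n g i * (s i - sstar) := by
    rw [Finset.sum_filter]
    refine Finset.sum_congr rfl fun i _ => ?_
    by_cases h : j ≤ (i : ℕ)
    · simp only [if_pos h]
      have h1 : sstar ≤ s i := hmaxge i h
      rw [max_eq_left (by linarith)]
    · simp only [if_neg h]
      have h1 : s i ≤ sstar := hmaxle i h
      rw [max_eq_right (by linarith), mul_zero]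
  have hexp : ∑ i ∈ Finset.univ.filter (fun i : Fin n => j ≤ (i : ℕ)),
        coeff n g i * (s i - sstar)
      = (∑ i ∈ Finset.univ.filter (fun i : Fin n => j ≤ (i : ℕ)),
          coeff n g i * s i) - (1 - α) * sstar := by
    simp only [mul_sub]
    rw [Finset.sum_sub_distrib, ← Finset.sum_mul, hsum]
  set T := ∑ i ∈ Finset.univ.filter (fun i : Fin n => j ≤ (i : ℕ)),
    coeff n g i * s i with hT
  have hobjval : sgesObj g α x sstar = sstar + (1 - α)⁻¹ * (T - (1 - α) * sstar) := by
    simp only [sgesObj, ← hs]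
    rw [hSstar, hexp]
  rw [nges, hinf, hobjval]
  field_simp
  ring
end

section
/- Let g be a continuous distortion function. For every fixed x ∈ ℝⁿ, the map α ↦ ⟨⟨x⟩⟩_α^{g} = n(1−α)⟨⟨x⟩⟩_α^{S,g} is monotone decreasing on [0,1): if 0 ≤ α ≤ β < 1 then ⟨⟨x⟩⟩_α^{g} ≥ ⟨⟨x⟩⟩_β^{g}. -/
open Finset

/-- for a continuous distortion function, the non-scaled generalized-ES
norm is monotone decreasing in the level `α` on `[0,1)`. -/
theorem stmt13 (n : ℕ) (hn : 1 ≤ n) (g : ℝ → ℝ)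
    (hg_mono : MonotoneOn g (Set.Icc 0 1)) (hg0 : g 0 = 0) (hg1 : g 1 = 1)
    (hg_cont : ContinuousOn g (Set.Icc 0 1))
    (x : Fin n → ℝ) (α β : ℝ) (hα : 0 ≤ α) (hαβ : α ≤ β) (hβ : β < 1) :
    nges g β x ≤ nges g α x := by
  have hnpos : (0:ℝ) < n := by exact_mod_cast Nat.lt_of_lt_of_le Nat.zero_lt_one hn
  have hn0 : (n:ℝ) ≠ 0 := ne_of_gt hnpos
  have ha_nonneg : ∀ i, 0 ≤ absSorted x i := fun i => abs_nonneg _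
  have hc : ∀ i : Fin n, 0 ≤ coeff n g i := by
    intro i
    have h1 : ((i:ℕ):ℝ)/n ∈ Set.Icc (0:ℝ) 1 := by
      constructor
      · positivity
      · rw [div_le_one hnpos]
        exact_mod_cast (le_of_lt i.isLt)
    have h2 : (((i:ℕ):ℝ)+1)/n ∈ Set.Icc (0:ℝ) 1 := by
      constructor
      · positivity
      · rw [div_le_one hnpos]
        exact_mod_cast i.isLt
    have hle : ((i:ℕ):ℝ)/n ≤ (((i:ℕ):ℝ)+1)/n := by
      rw [div_le_div_iff₀ hnpos hnpos]
      nlinarith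
    have := hg_mono h1 h2 hle
    simpa [coeff, sub_nonneg] using this
  have hsum : ∑ i : Fin n, coeff n g i = 1 := by
    have h1 : ∑ i : Fin n, coeff n g i
        = ∑ k ∈ Finset.range n, ((fun k : ℕ => g ((k:ℝ)/n)) (k+1) - (fun k : ℕ => g ((k:ℝ)/n)) k) := by
      rw [← Fin.sum_univ_eq_sum_range]
      apply Finset.sum_congr rfl
      intro k _
      simp only [coeff]
      push_cast
      ring_nf
    rw [h1, Finset.sum_range_sub (fun k : ℕ => g ((k:ℝ)/n)) n]
    simp [div_self hn0, hg0, hg1]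
  set S : ℝ := ∑ i, coeff n g i * absSorted x i with hS
  have hS_nonneg : 0 ≤ S := Finset.sum_nonneg fun i _ => mul_nonneg (hc i) (ha_nonneg i)
  have hsum_nonneg : ∀ t : ℝ, 0 ≤ ∑ i, coeff n g i * max (absSorted x i - t) 0 :=
    fun t => Finset.sum_nonneg fun i _ => mul_nonneg (hc i) (le_max_right _ _)
  have hsum_neg : ∀ t : ℝ, t ≤ 0 → ∑ i, coeff n g i * max (absSorted x i - t) 0 = S - t := by
    intro t ht
    have h1 : ∑ i, coeff n g i * max (absSorted x i - t) 0
        = ∑ i, (coeff n g i * absSorted x i - coeff n g i * t) := by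
      apply Finset.sum_congr rfl
      intro i _
      rw [max_eq_left (by linarith [ha_nonneg i])]
      ring
    rw [h1, Finset.sum_sub_distrib, ← Finset.sum_mul, hsum]
    ring
  have hobj_nonneg : ∀ γ : ℝ, 0 ≤ γ → γ < 1 → ∀ t : ℝ, 0 ≤ sgesObj g γ x t := by
    intro γ hγ0 hγ1 t
    have hγinv : 1 ≤ (1 - γ)⁻¹ := by
      rw [le_inv_comm₀ one_pos (by linarith)]
      linarith
    rcases le_or_gt 0 t with ht | ht
    · have : 0 ≤ (1 - γ)⁻¹ * ∑ i, coeff n g i * max (absSorted x i - t) 0 :=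
        mul_nonneg (by linarith) (hsum_nonneg t)
      simp only [sgesObj]; linarith
    · have h1 := hsum_neg t ht.le
      simp only [sgesObj, h1]
      nlinarith [mul_le_mul_of_nonneg_right hγinv (by linarith : (0:ℝ) ≤ S - t)]
  have hBdd : ∀ γ : ℝ, 0 ≤ γ → γ < 1 → BddBelow (Set.range (sgesObj g γ x)) := by
    intro γ hγ0 hγ1
    exact ⟨0, by rintro y ⟨t, rfl⟩; exact hobj_nonneg γ hγ0 hγ1 t⟩
  have hβ0 : 0 ≤ β := le_trans hα hαβ
  have hα1 : α < 1 := lt_of_le_of_lt hαβ hβ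
  have hαpos : (0:ℝ) < (n:ℝ) * (1 - α) := mul_pos hnpos (by linarith)
  have hβpos : (0:ℝ) < (n:ℝ) * (1 - β) := mul_pos hnpos (by linarith)
  have expand : ∀ γ : ℝ, γ < 1 → ∀ t : ℝ,
      (n:ℝ) * (1 - γ) * sgesObj g γ x t
        = (n:ℝ) * (1 - γ) * t + n * ∑ i, coeff n g i * max (absSorted x i - t) 0 := by
    intro γ hγ t
    have h1γ : (1 - γ) ≠ 0 := by linarith
    simp only [sgesObj]
    field_simp
  have key : ∀ t : ℝ, (n:ℝ) * (1 - β) * sgesObj g β x (max t 0)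
      ≤ (n:ℝ) * (1 - α) * sgesObj g α x t := by
    intro t
    rcases le_or_gt 0 t with ht | ht
    · rw [max_eq_left ht, expand β hβ t, expand α hα1 t]
      have : (n:ℝ) * (1 - β) * t ≤ (n:ℝ) * (1 - α) * t := by
        nlinarith [mul_nonneg (mul_nonneg hnpos.le (by linarith : (0:ℝ) ≤ β - α)) ht]
      linarith
    · rw [max_eq_right ht.le, expand β hβ 0, expand α hα1 t,
        hsum_neg 0 le_rfl, hsum_neg t ht.le]
      nlinarith [mul_nonneg (mul_nonneg hnpos.le hα) (neg_nonneg.mpr ht.le)]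
  have step1 : ∀ t : ℝ, nges g β x ≤ (n:ℝ) * (1 - α) * sgesObj g α x t := by
    intro t
    have h1 : sges g β x ≤ sgesObj g β x (max t 0) := ciInf_le (hBdd β hβ0 hβ) _
    have h2 : (n:ℝ) * (1 - β) * sges g β x ≤ (n:ℝ) * (1 - β) * sgesObj g β x (max t 0) :=
      mul_le_mul_of_nonneg_left h1 hβpos.le
    exact le_trans h2 (key t)
  have step2 : nges g β x / ((n:ℝ) * (1 - α)) ≤ sges g α x := by
    apply le_ciInf
    intro t
    rw [div_le_iff₀' hαpos]
    exact step1 t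
  rw [div_le_iff₀' hαpos] at step2
  exact step2
end

section
/- Let g be a continuous convex distortion function. For every fixed x ∈ ℝⁿ, the map α ↦ ⟨⟨x⟩⟩_α^{g} = n(1−α)⟨⟨x⟩⟩_α^{S,g} is concave on [0,1): for all α, β ∈ [0,1) and θ ∈ [0,1], ⟨⟨x⟩⟩_{θα+(1−θ)β}^{g} ≥ θ ⟨⟨x⟩⟩_α^{g} + (1−θ) ⟨⟨x⟩⟩_β^{g}. In particular, with α_j = g(j/n), for j = 1,…,n−1 one has ⟨⟨x⟩⟩_{α_j}^{g} ≥ (1/2)(⟨⟨x⟩⟩_{α_{j−1}}^{g} + ⟨⟨x⟩⟩_{α_{j+1}}^{g}). -/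
open Finset

/-- for a continuous convex distortion function, the non-scaled
generalized-ES norm is concave in `α` on `[0,1)`; in particular, at the grid points
`α_j = g(j/n)` one has `⟨⟨x⟩⟩_{α_j} ≥ (⟨⟨x⟩⟩_{α_{j-1}} + ⟨⟨x⟩⟩_{α_{j+1}})/2` for
`j = 1,…,n-1`. -/
theorem stmt14 (n : ℕ) (hn : 1 ≤ n) (g : ℝ → ℝ)
    (hg_mono : MonotoneOn g (Set.Icc 0 1)) (hg_conv : ConvexOn ℝ (Set.Icc 0 1) g)
    (hg0 : g 0 = 0) (hg1 : g 1 = 1)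
    (hg_cont : ContinuousOn g (Set.Icc 0 1))
    (x : Fin n → ℝ) :
    (∀ α β θ : ℝ, α ∈ Set.Ico (0 : ℝ) 1 → β ∈ Set.Ico (0 : ℝ) 1 →
        θ ∈ Set.Icc (0 : ℝ) 1 →
        θ * nges g α x + (1 - θ) * nges g β x ≤ nges g (θ * α + (1 - θ) * β) x) ∧
      (∀ j : ℕ, 1 ≤ j → j ≤ n - 1 →
        (nges g (g (((j : ℝ) - 1) / n)) x + nges g (g (((j : ℝ) + 1) / n)) x) / 2
          ≤ nges g (g ((j : ℝ) / n)) x) := by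
  classical
  have hn0 : (0:ℝ) < n := by exact_mod_cast hn
  set a : Fin n → ℝ := absSorted x with ha
  have ha_nn : ∀ i, 0 ≤ a i := fun i => abs_nonneg _
  have hmem : ∀ i : Fin n, ((i:ℕ):ℝ)/n ∈ Set.Icc (0:ℝ) 1 := by
    intro i
    refine ⟨by positivity, ?_⟩
    rw [div_le_one hn0]; exact_mod_cast i.2.le
  have hmem' : ∀ i : Fin n, (((i:ℕ):ℝ)+1)/n ∈ Set.Icc (0:ℝ) 1 := by
    intro i
    refine ⟨by positivity, ?_⟩
    rw [div_le_one hn0]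
    have : (i:ℕ) + 1 ≤ n := i.2
    exact_mod_cast this
  have hc_nn : ∀ i : Fin n, 0 ≤ coeff n g i := by
    intro i
    have h1 : ((i:ℕ):ℝ)/n ≤ (((i:ℕ):ℝ)+1)/n := by gcongr <;> linarith
    exact sub_nonneg.mpr (hg_mono (hmem i) (hmem' i) h1)
  have hcsum : ∑ i, coeff n g i = 1 := by
    have h2 : ∀ k : ℕ, g (((k:ℝ)+1)/n) - g ((k:ℝ)/n)
        = (fun m : ℕ => g ((m:ℝ)/n)) (k+1) - (fun m : ℕ => g ((m:ℝ)/n)) k := by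
      intro k; push_cast; ring_nf
    calc ∑ i : Fin n, coeff n g i
        = ∑ i ∈ Finset.range n, (g (((i:ℝ)+1)/n) - g ((i:ℝ)/n)) :=
          Fin.sum_univ_eq_sum_range (fun k : ℕ => g (((k:ℝ)+1)/n) - g ((k:ℝ)/n)) n
      _ = ∑ i ∈ Finset.range n,
            ((fun m : ℕ => g ((m:ℝ)/n)) (i+1) - (fun m : ℕ => g ((m:ℝ)/n)) i) :=
          Finset.sum_congr rfl (fun i _ => h2 i)
      _ = (fun m : ℕ => g ((m:ℝ)/n)) n - (fun m : ℕ => g ((m:ℝ)/n)) 0 :=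
          Finset.sum_range_sub (fun m : ℕ => g ((m:ℝ)/n)) n
      _ = 1 := by
          simp only []
          rw [div_self hn0.ne']
          simp [hg0, hg1]
  -- g is between 0 and the identity on [0,1]
  have hg_nn : ∀ t ∈ Set.Icc (0:ℝ) 1, 0 ≤ g t := by
    intro t ht
    have := hg_mono (Set.left_mem_Icc.mpr zero_le_one) ht ht.1
    simpa [hg0] using this
  have hg_le_id : ∀ t ∈ Set.Icc (0:ℝ) 1, g t ≤ t := by
    intro t ht
    have h := hg_conv.2 (Set.left_mem_Icc.mpr zero_le_one)
      (Set.right_mem_Icc.mpr zero_le_one) (by linarith [ht.2] : (0:ℝ) ≤ 1 - t)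
      ht.1 (by ring)
    simpa [hg0, hg1] using h
  -- the family of affine-in-α functions
  set h : ℝ → ℝ → ℝ := fun t α =>
    (n:ℝ)*(1-α)*t + (n:ℝ) * ∑ i, coeff n g i * max (a i - t) 0 with hh
  have hsum_nn : ∀ t : ℝ, 0 ≤ ∑ i, coeff n g i * max (a i - t) 0 :=
    fun t => Finset.sum_nonneg fun i _ => mul_nonneg (hc_nn i) (le_max_right _ _)
  have hh_nn : ∀ t : ℝ, 0 ≤ t → ∀ α : ℝ, α ≤ 1 → 0 ≤ h t α := by
    intro t ht α hα
    have h1 : (0:ℝ) ≤ (n:ℝ)*(1-α)*t :=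
      mul_nonneg (mul_nonneg hn0.le (by linarith)) ht
    have h2 : (0:ℝ) ≤ (n:ℝ) * ∑ i, coeff n g i * max (a i - t) 0 :=
      mul_nonneg hn0.le (hsum_nn t)
    simp only [hh]
    linarith
  haveI : Nonempty (Set.Ici (0:ℝ)) := ⟨⟨0, Set.self_mem_Ici⟩⟩
  set F : ℝ → ℝ := fun α => ⨅ t : Set.Ici (0:ℝ), h t α with hF
  have hbdd : ∀ α : ℝ, α ≤ 1 →
      BddBelow (Set.range fun t : Set.Ici (0:ℝ) => h t.1 α) := by
    intro α hα
    exact ⟨0, by rintro r ⟨t, rfl⟩; exact hh_nn t.1 t.2 α hα⟩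
  have hF_le : ∀ α : ℝ, α ≤ 1 → ∀ t : ℝ, 0 ≤ t → F α ≤ h t α := by
    intro α hα t ht
    exact ciInf_le (hbdd α hα) ⟨t, ht⟩
  have hF_nn : ∀ α : ℝ, α ≤ 1 → 0 ≤ F α := by
    intro α hα
    exact le_ciInf fun t => hh_nn t.1 t.2 α hα
  -- key: nges = F on [0,1)
  have key_eq : ∀ α ∈ Set.Ico (0:ℝ) 1, nges g α x = F α := by
    intro α hα
    have hpos : 0 < 1 - α := by linarith [hα.2]
    have hinv : (1-α) * (1-α)⁻¹ = 1 := mul_inv_cancel₀ hpos.ne'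
    have hc0 : (0:ℝ) ≤ (1-α)⁻¹ := by positivity
    have hc1 : (1:ℝ) ≤ (1-α)⁻¹ := by nlinarith [hα.1]
    set f : ℝ → ℝ := fun t => sgesObj g α x t with hfdef
    have hf : ∀ t, f t = t + (1-α)⁻¹ * ∑ i, coeff n g i * max (a i - t) 0 :=
      fun t => rfl
    have hf_mono : ∀ t : ℝ, t < 0 → f 0 ≤ f t := by
      intro t ht
      rw [hf, hf]
      have hmax : ∀ i : Fin n, max (a i - t) 0 = a i - t := by
        intro i; rw [max_eq_left]; linarith [ha_nn i]
      have hmax0 : ∀ i : Fin n, max (a i - 0) 0 = a i := by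
        intro i; rw [sub_zero, max_eq_left (ha_nn i)]
      simp only [hmax, hmax0]
      have hsplit : ∑ i, coeff n g i * (a i - t)
          = (∑ i, coeff n g i * a i) - t := by
        have e1 : ∑ i, coeff n g i * (a i - t)
            = ∑ i, (coeff n g i * a i - coeff n g i * t) :=
          Finset.sum_congr rfl fun i _ => by ring
        rw [e1, Finset.sum_sub_distrib, ← Finset.sum_mul, hcsum, one_mul]
      rw [hsplit]
      nlinarith [mul_nonneg (by linarith : (0:ℝ) ≤ (1-α)⁻¹ - 1)
        (by linarith : (0:ℝ) ≤ -t)]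
    have hf0_nn : 0 ≤ f 0 := by
      rw [hf]
      have := mul_nonneg hc0 (hsum_nn 0)
      linarith
    have hf_nn : ∀ t, f 0 ≤ f t ∨ 0 ≤ f t := by
      intro t
      rcases lt_or_ge t 0 with ht | ht
      · exact Or.inl (hf_mono t ht)
      · refine Or.inr ?_
        rw [hf]
        have := mul_nonneg hc0 (hsum_nn t)
        linarith
    have hfbdd : BddBelow (Set.range f) := by
      refine ⟨0, ?_⟩
      rintro r ⟨t, rfl⟩
      rcases hf_nn t with h1 | h1
      · linarith
      · exact h1
    have hfbdd' : BddBelow (Set.range fun t : Set.Ici (0:ℝ) => f t.1) := by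
      refine ⟨0, ?_⟩
      rintro r ⟨t, rfl⟩
      rcases hf_nn t.1 with h1 | h1
      · linarith
      · exact h1
    have hinf_eq : (⨅ t : ℝ, f t) = ⨅ t : Set.Ici (0:ℝ), f t.1 := by
      apply le_antisymm
      · exact le_ciInf fun t => ciInf_le hfbdd t.1
      · refine le_ciInf fun t => ?_
        rcases le_or_gt 0 t with ht | ht
        · exact ciInf_le hfbdd' ⟨t, ht⟩
        · calc (⨅ s : Set.Ici (0:ℝ), f s.1) ≤ f 0 :=
              ciInf_le hfbdd' ⟨0, Set.self_mem_Ici⟩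
            _ ≤ f t := hf_mono t ht
    have hmul : ∀ t : ℝ, 0 ≤ t → (n:ℝ) * (1-α) * f t = h t α := by
      intro t ht
      rw [hf]
      have : (n:ℝ) * (1-α) * (t + (1-α)⁻¹ * ∑ i, coeff n g i * max (a i - t) 0)
          = (n:ℝ)*(1-α)*t
            + (n:ℝ) * ((1-α) * (1-α)⁻¹) * ∑ i, coeff n g i * max (a i - t) 0 := by
        ring
      rw [this, hinv]
      simp only [hh]
      ring
    have hrw : nges g α x = (n:ℝ) * (1-α) * ⨅ t : ℝ, f t := rfl
    rw [hrw, hinf_eq, Real.mul_iInf_of_nonneg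
      (by positivity : (0:ℝ) ≤ (n:ℝ) * (1-α))]
    simp only [hF]
    exact iInf_congr fun t => hmul t.1 t.2
  -- concavity of F
  have key_concave : ∀ α β θ : ℝ, α ≤ 1 → β ≤ 1 → 0 ≤ θ → θ ≤ 1 →
      θ * F α + (1 - θ) * F β ≤ F (θ * α + (1 - θ) * β) := by
    intro α β θ hα hβ hθ0 hθ1
    refine le_ciInf fun t => ?_
    have h1 : θ * F α ≤ θ * h t.1 α :=
      mul_le_mul_of_nonneg_left (hF_le α hα t.1 t.2) hθ0
    have h2 : (1 - θ) * F β ≤ (1 - θ) * h t.1 β :=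
      mul_le_mul_of_nonneg_left (hF_le β hβ t.1 t.2) (by linarith)
    have h3 : θ * h t.1 α + (1 - θ) * h t.1 β = h t.1 (θ * α + (1 - θ) * β) := by
      simp only [hh]; ring
    linarith
  -- antitonicity of F
  have key_mono : ∀ α β : ℝ, α ≤ β → β ≤ 1 → F β ≤ F α := by
    intro α β hαβ hβ
    refine le_ciInf fun t => ?_
    calc F β ≤ h t.1 β := hF_le β hβ t.1 t.2
      _ ≤ h t.1 α := by
        simp only [hh]
        have h1 : (n:ℝ)*(1-β)*t.1 ≤ (n:ℝ)*(1-α)*t.1 :=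
          mul_le_mul_of_nonneg_right
            (mul_le_mul_of_nonneg_left (by linarith) hn0.le) t.2
        linarith
  -- nges ≤ F on [0,1]
  have key_le : ∀ α : ℝ, 0 ≤ α → α ≤ 1 → nges g α x ≤ F α := by
    intro α hα0 hα1
    rcases lt_or_eq_of_le hα1 with h1 | h1
    · exact (key_eq α ⟨hα0, h1⟩).le
    · subst h1
      have h0 : nges g 1 x = 0 := by
        show (n:ℝ) * (1 - 1) * sges g 1 x = 0
        ring
      rw [h0]
      exact hF_nn 1 le_rfl
  constructor
  · intro α β θ hα hβ hθ
    have hγ : θ * α + (1 - θ) * β ∈ Set.Ico (0:ℝ) 1 := by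
      have := (convex_Ico (0:ℝ) 1) hα hβ (a := θ) (b := 1-θ) hθ.1
        (by linarith [hθ.2]) (by ring)
      simpa using this
    rw [key_eq α hα, key_eq β hβ, key_eq _ hγ]
    exact key_concave α β θ hα.2.le hβ.2.le hθ.1 hθ.2
  · intro j hj1 hjn
    have hjn' : (j:ℝ) ≤ (n:ℝ) - 1 := by
      have h1 : j + 1 ≤ n := by omega
      have h2 : ((j:ℝ)) + 1 ≤ (n:ℝ) := by exact_mod_cast h1
      linarith
    have hj1' : (1:ℝ) ≤ (j:ℝ) := by exact_mod_cast hj1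
    set p : ℝ := ((j:ℝ) - 1)/n with hp
    set q : ℝ := ((j:ℝ) + 1)/n with hq
    set r : ℝ := (j:ℝ)/n with hr
    have hpmem : p ∈ Set.Icc (0:ℝ) 1 := by
      constructor
      · apply div_nonneg (by linarith) hn0.le
      · rw [hp, div_le_one hn0]; linarith
    have hqmem : q ∈ Set.Icc (0:ℝ) 1 := by
      constructor
      · apply div_nonneg (by linarith) hn0.le
      · rw [hq, div_le_one hn0]; linarith
    have hrmem : r ∈ Set.Icc (0:ℝ) 1 := by
      constructor
      · apply div_nonneg (by linarith) hn0.le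
      · rw [hr, div_le_one hn0]; linarith
    have hp1 : p < 1 := by rw [hp, div_lt_one hn0]; linarith
    have hr1 : r < 1 := by rw [hr, div_lt_one hn0]; linarith
    have hgp : g p ∈ Set.Ico (0:ℝ) 1 :=
      ⟨hg_nn p hpmem, lt_of_le_of_lt (hg_le_id p hpmem) hp1⟩
    have hgr : g r ∈ Set.Ico (0:ℝ) 1 :=
      ⟨hg_nn r hrmem, lt_of_le_of_lt (hg_le_id r hrmem) hr1⟩
    have hgq0 : 0 ≤ g q := hg_nn q hqmem
    have hgq1 : g q ≤ 1 := le_trans (hg_le_id q hqmem) hqmem.2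
    -- midpoint
    have hmid : g r ≤ (g p + g q)/2 := by
      have hcv := hg_conv.2 hpmem hqmem (by norm_num : (0:ℝ) ≤ 1/2)
        (by norm_num : (0:ℝ) ≤ 1/2) (by norm_num)
      have hpq : (1/2 : ℝ) • p + (1/2 : ℝ) • q = r := by
        simp only [smul_eq_mul, hp, hq, hr]
        field_simp
        ring
      rw [hpq] at hcv
      calc g r ≤ (1/2:ℝ) * g p + (1/2:ℝ) * g q := by simpa using hcv
        _ = (g p + g q)/2 := by ring
    have hmid1 : (g p + g q)/2 ≤ 1 := by
      have := hgp.2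
      linarith
    calc (nges g (g p) x + nges g (g q) x) / 2
        = (1/2) * nges g (g p) x + (1 - 1/2) * nges g (g q) x := by ring
      _ ≤ (1/2) * F (g p) + (1 - 1/2) * F (g q) := by
          have h1 := key_eq (g p) hgp
          have h2 := key_le (g q) hgq0 hgq1
          nlinarith
      _ ≤ F ((1/2) * g p + (1 - 1/2) * g q) :=
          key_concave (g p) (g q) (1/2) hgp.2.le hgq1 (by norm_num) (by norm_num)
      _ = F ((g p + g q)/2) := by norm_num; congr 1; ring
      _ ≤ F (g r) := key_mono (g r) ((g p + g q)/2) hmid hmid1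
      _ = nges g (g r) x := (key_eq (g r) hgr).symm
end

section
/- Let w₁,…,w_n be real weights with 0 ≤ w₁ ≤ … ≤ w_n and w_n > 0, and define the ordered weighted L₁ (OWL) norm Ω_w(x) = Σ_{i=1}^n w_i |x|_(i) on ℝⁿ. Then its dual norm, Ω*_w(y) = sup{ xᵀy : Ω_w(x) ≤ 1 }, is given by Ω*_w(y) = max_{1≤i≤n} τ_i Σ_{k=i}^n |y|_(k), where τ_i = (Σ_{k=i}^n w_k)^{-1}. -/
open Finset

lemma absSorted_nonneg {n : ℕ} (x : Fin n → ℝ) (i : Fin n) : 0 ≤ absSorted x i := abs_nonneg _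

/-- Telescoping: partial sums of increments recover `a`. -/
lemma tel_sum {n : ℕ} (a : Fin n → ℝ) (k : Fin n) :
    ∑ i ∈ univ.filter (fun i : Fin n => (i : ℕ) ≤ (k : ℕ)),
      (a i - (if h : 0 < (i : ℕ) then a ⟨(i : ℕ) - 1, by omega⟩ else 0)) = a k := by
  classical
  set f : ℕ → ℝ := fun m => if h : 0 < m ∧ m ≤ n then a ⟨m - 1, by omega⟩ else 0 with hf
  have hd : ∀ i : Fin n,
      (a i - (if h : 0 < (i : ℕ) then a ⟨(i : ℕ) - 1, by omega⟩ else 0))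
        = f ((i : ℕ) + 1) - f (i : ℕ) := by
    intro i
    have hc1 : 0 < (i : ℕ) + 1 ∧ (i : ℕ) + 1 ≤ n := ⟨Nat.succ_pos _, i.2⟩
    have h1 : f ((i : ℕ) + 1) = a i := by
      simp only [hf]
      rw [dif_pos hc1]
      simp
    rw [h1]
    congr 1
    by_cases hi : 0 < (i : ℕ)
    · have hc2 : 0 < (i : ℕ) ∧ (i : ℕ) ≤ n := ⟨hi, le_of_lt i.2⟩
      rw [dif_pos hi]
      simp only [hf]
      rw [dif_pos hc2]
    · have hc2 : ¬(0 < (i : ℕ) ∧ (i : ℕ) ≤ n) := by tauto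
      rw [dif_neg hi]
      simp only [hf]
      rw [dif_neg hc2]
  calc ∑ i ∈ univ.filter (fun i : Fin n => (i : ℕ) ≤ (k : ℕ)),
        (a i - (if h : 0 < (i : ℕ) then a ⟨(i : ℕ) - 1, by omega⟩ else 0))
      = ∑ i : Fin n, (if (i : ℕ) ≤ (k : ℕ) then f ((i : ℕ) + 1) - f (i : ℕ) else 0) := by
        rw [Finset.sum_filter]; exact Finset.sum_congr rfl (fun i _ => by rw [hd])
    _ = ∑ m ∈ Finset.range n, (if m ≤ (k : ℕ) then f (m + 1) - f m else 0) := by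
        exact Fin.sum_univ_eq_sum_range (fun m => if m ≤ (k : ℕ) then f (m + 1) - f m else 0) n
    _ = ∑ m ∈ (Finset.range n).filter (fun m => m ≤ (k : ℕ)), (f (m + 1) - f m) := by
        rw [Finset.sum_filter]
    _ = ∑ m ∈ Finset.range ((k : ℕ) + 1), (f (m + 1) - f m) := by
        congr 1
        ext m
        simp only [mem_filter, mem_range]
        have := k.2
        omega
    _ = f ((k : ℕ) + 1) - f 0 := Finset.sum_range_sub f ((k : ℕ) + 1)
    _ = a k := by
        have hck : 0 < (k : ℕ) + 1 ∧ (k : ℕ) + 1 ≤ n := ⟨Nat.succ_pos _, k.2⟩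
        have h0 : f 0 = 0 := by simp only [hf]; rw [dif_neg (by omega)]
        have h1 : f ((k : ℕ) + 1) = a k := by
          simp only [hf]; rw [dif_pos hck]; simp
        rw [h0, h1, sub_zero]

/-- Abel-summation bound. -/
lemma abel_bound {n : ℕ} (a s w : Fin n → ℝ) (M : ℝ)
    (ha : Monotone a) (ha0 : ∀ i, 0 ≤ a i) (hs : ∀ i, 0 ≤ s i)
    (hM : ∀ i : Fin n, ∑ k ∈ univ.filter (fun k : Fin n => (i : ℕ) ≤ (k : ℕ)), s k
        ≤ M * ∑ k ∈ univ.filter (fun k : Fin n => (i : ℕ) ≤ (k : ℕ)), w k) :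
    ∑ i, a i * s i ≤ M * ∑ i, w i * a i := by
  classical
  set d : Fin n → ℝ :=
    fun i => a i - (if h : 0 < (i : ℕ) then a ⟨(i : ℕ) - 1, by omega⟩ else 0) with hdd
  have hd0 : ∀ i, 0 ≤ d i := by
    intro i
    simp only [hdd]
    by_cases hi : 0 < (i : ℕ)
    · rw [dif_pos hi]
      have : (⟨(i : ℕ) - 1, by omega⟩ : Fin n) ≤ i := by
        simp only [Fin.le_def]; omega
      linarith [ha this]
    · rw [dif_neg hi]; linarith [ha0 i]
  have htel : ∀ k : Fin n,
      ∑ i ∈ univ.filter (fun i : Fin n => (i : ℕ) ≤ (k : ℕ)), d i = a k := fun k => tel_sum a k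
  have hswap : ∀ v : Fin n → ℝ,
      ∑ k : Fin n, a k * v k
        = ∑ i : Fin n, d i * ∑ k ∈ univ.filter (fun k : Fin n => (i : ℕ) ≤ (k : ℕ)), v k := by
    intro v
    calc ∑ k : Fin n, a k * v k
        = ∑ k : Fin n, ∑ i ∈ univ.filter (fun i : Fin n => (i : ℕ) ≤ (k : ℕ)), d i * v k := by
          refine Finset.sum_congr rfl (fun k _ => ?_)
          rw [← Finset.sum_mul, htel]
      _ = ∑ i : Fin n, ∑ k ∈ univ.filter (fun k : Fin n => (i : ℕ) ≤ (k : ℕ)), d i * v k := by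
          refine Finset.sum_comm' (fun k i => ?_)
          simp [and_comm]
      _ = ∑ i : Fin n, d i * ∑ k ∈ univ.filter (fun k : Fin n => (i : ℕ) ≤ (k : ℕ)), v k := by
          refine Finset.sum_congr rfl (fun i _ => ?_)
          rw [Finset.mul_sum]
  calc ∑ i, a i * s i
      = ∑ i : Fin n, d i * ∑ k ∈ univ.filter (fun k : Fin n => (i : ℕ) ≤ (k : ℕ)), s k :=
        hswap s
    _ ≤ ∑ i : Fin n, d i * (M * ∑ k ∈ univ.filter (fun k : Fin n => (i : ℕ) ≤ (k : ℕ)), w k) :=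
        Finset.sum_le_sum (fun i _ => mul_le_mul_of_nonneg_left (hM i) (hd0 i))
    _ = M * ∑ i : Fin n, d i * ∑ k ∈ univ.filter (fun k : Fin n => (i : ℕ) ≤ (k : ℕ)), w k := by
        rw [Finset.mul_sum]; exact Finset.sum_congr rfl (fun i _ => by ring)
    _ = M * ∑ k : Fin n, a k * w k := by rw [hswap w]
    _ = M * ∑ i, w i * a i := by
        congr 1; exact Finset.sum_congr rfl (fun i _ => mul_comm _ _)

/-- the dual norm of the ordered weighted L1 (OWL) norm with weights
`0 ≤ w₁ ≤ … ≤ w_n`, `w_n > 0`, is `y ↦ max_i τᵢ ∑_{k=i}^n |y|₍ₖ₎` with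
`τᵢ = (∑_{k=i}^n w_k)⁻¹`. -/
theorem stmt15 (n : ℕ) (hn : 1 ≤ n) (w : Fin n → ℝ)
    (hw0 : ∀ i, 0 ≤ w i) (hw_mono : Monotone w) (hwn : 0 < w ⟨n - 1, by omega⟩)
    (y : Fin n → ℝ) :
    dualNorm (owl w) y
      = ⨆ i : Fin n,
          (∑ k ∈ Finset.univ.filter (fun k : Fin n => (i : ℕ) ≤ (k : ℕ)), w k)⁻¹ *
            ∑ k ∈ Finset.univ.filter (fun k : Fin n => (i : ℕ) ≤ (k : ℕ)),
              absSorted y k := by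
  classical
  have hne : Nonempty (Fin n) := ⟨⟨0, by omega⟩⟩
  set σ : Equiv.Perm (Fin n) := Tuple.sort (fun j => |y j|) with hσ
  set s : Fin n → ℝ := absSorted y with hs
  set W : Fin n → ℝ := fun i => ∑ k ∈ univ.filter (fun k : Fin n => (i : ℕ) ≤ (k : ℕ)), w k
    with hW
  set S : Fin n → ℝ := fun i => ∑ k ∈ univ.filter (fun k : Fin n => (i : ℕ) ≤ (k : ℕ)), s k
    with hS
  show dualNorm (owl w) y = ⨆ i : Fin n, (W i)⁻¹ * S i
  have hs0 : ∀ k, 0 ≤ s k := absSorted_nonneg y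
  have hWpos : ∀ i : Fin n, 0 < W i := by
    intro i
    have hmem : (⟨n - 1, by omega⟩ : Fin n) ∈
        univ.filter (fun k : Fin n => (i : ℕ) ≤ (k : ℕ)) := by
      simp only [mem_filter, mem_univ, true_and]
      have := i.2; omega
    calc (0 : ℝ) < w ⟨n - 1, by omega⟩ := hwn
      _ ≤ W i := Finset.single_le_sum (fun k _ => hw0 k) hmem
  have hS0 : ∀ i, 0 ≤ S i := fun i => Finset.sum_nonneg (fun k _ => hs0 k)
  obtain ⟨i₀, hi₀⟩ : ∃ i₀ : Fin n, ∀ j, (W j)⁻¹ * S j ≤ (W i₀)⁻¹ * S i₀ :=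
    Finite.exists_max _
  set M : ℝ := (W i₀)⁻¹ * S i₀ with hMdef
  have hMsup : (⨆ i : Fin n, (W i)⁻¹ * S i) = M := by
    refine le_antisymm (ciSup_le hi₀)
      (le_ciSup (f := fun i : Fin n => (W i)⁻¹ * S i) ⟨M, ?_⟩ i₀)
    rintro r ⟨j, rfl⟩; exact hi₀ j
  rw [hMsup]
  have hM0 : 0 ≤ M := mul_nonneg (inv_nonneg.mpr (hWpos i₀).le) (hS0 i₀)
  have hMi : ∀ i : Fin n, S i ≤ M * W i := by
    intro i
    calc S i = W i * ((W i)⁻¹ * S i) := by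
          rw [← mul_assoc, mul_inv_cancel₀ (hWpos i).ne', one_mul]
      _ ≤ W i * M := mul_le_mul_of_nonneg_left (hi₀ i) (hWpos i).le
      _ = M * W i := mul_comm _ _
  -- upper bound for every element of the defining set
  have hub : ∀ r ∈ {r : ℝ | ∃ x : Fin n → ℝ, owl w x ≤ 1 ∧ r = ∑ i, x i * y i}, r ≤ M := by
    rintro r ⟨x, hx1, rfl⟩
    set σx : Equiv.Perm (Fin n) := Tuple.sort (fun j => |x j|) with hσx
    set a : Fin n → ℝ := absSorted x with ha
    have step1 : ∑ i, x i * y i ≤ ∑ i, |x i| * |y i| :=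
      Finset.sum_le_sum fun i _ => (le_abs_self _).trans (le_of_eq (abs_mul _ _))
    have step2 : ∑ i, |x i| * |y i| = ∑ i, a i * s ((σx.trans σ.symm) i) := by
      rw [← Equiv.sum_comp σx (fun i => |x i| * |y i|)]
      refine Finset.sum_congr rfl fun i _ => ?_
      congr 1
      show |y (σx i)| = |y (σ (σ.symm (σx i)))|
      rw [Equiv.apply_symm_apply]
    have step3 : ∑ i, a i * s ((σx.trans σ.symm) i) ≤ ∑ i, a i * s i :=
      ((absSorted_mono x).monovary (absSorted_mono y)).sum_mul_comp_perm_le_sum_mul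
    have step4 : ∑ i, a i * s i ≤ M * ∑ i, w i * a i :=
      abel_bound a s w M (absSorted_mono x) (absSorted_nonneg x) hs0 hMi
    have howl : ∑ i, w i * a i ≤ 1 := hx1
    calc ∑ i, x i * y i ≤ M * ∑ i, w i * a i :=
          le_trans step1 (le_trans (le_of_eq step2) (le_trans step3 step4))
      _ ≤ M * 1 := mul_le_mul_of_nonneg_left howl hM0
      _ = M := mul_one M
  have h0mem : (0 : ℝ) ∈ {r : ℝ | ∃ x : Fin n → ℝ, owl w x ≤ 1 ∧ r = ∑ i, x i * y i} := by
    refine ⟨fun _ => 0, ?_, by simp⟩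
    have : owl w (fun _ => 0) = 0 := by
      simp [owl, absSorted]
    rw [this]; norm_num
  -- the witness attaining M
  set τ : ℝ := (W i₀)⁻¹ with hτdef
  have hτ : 0 < τ := inv_pos.mpr (hWpos i₀)
  set xx : Fin n → ℝ :=
    fun j => if (i₀ : ℕ) ≤ ((σ.symm j : Fin n) : ℕ) then (if y j < 0 then -τ else τ) else 0
    with hxx
  have habs : ∀ k : Fin n, |xx (σ k)| = (if (i₀ : ℕ) ≤ (k : ℕ) then τ else 0) := by
    intro k
    simp only [hxx]
    rw [Equiv.symm_apply_apply]
    split_ifs <;> simp [abs_of_pos hτ]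
  have hmono : Monotone (fun k : Fin n => if (i₀ : ℕ) ≤ (k : ℕ) then τ else 0) := by
    intro k k' hkk'
    have hkk : (k : ℕ) ≤ (k' : ℕ) := hkk'
    dsimp only
    by_cases h1 : (i₀ : ℕ) ≤ (k : ℕ)
    · have h2 : (i₀ : ℕ) ≤ (k' : ℕ) := le_trans h1 hkk
      simp [h1, h2]
    · rw [if_neg h1]
      split_ifs <;> simp [hτ.le]
  have hsorted : absSorted xx = fun k : Fin n => if (i₀ : ℕ) ≤ (k : ℕ) then τ else 0 := by
    have h1 : (fun j => |xx j|) ∘ σ = fun k : Fin n => if (i₀ : ℕ) ≤ (k : ℕ) then τ else 0 :=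
      funext habs
    have h2 : (fun j => |xx j|) ∘ σ = (fun j => |xx j|) ∘ Tuple.sort (fun j => |xx j|) :=
      (Tuple.comp_sort_eq_comp_iff_monotone).mpr (h1 ▸ hmono)
    exact (h2.symm.trans h1)
  have howlxx : owl w xx ≤ 1 := by
    have : owl w xx = W i₀ * τ := by
      unfold owl
      rw [hsorted]
      calc ∑ i : Fin n, w i * (if (i₀ : ℕ) ≤ (i : ℕ) then τ else 0)
          = ∑ i : Fin n, (if (i₀ : ℕ) ≤ (i : ℕ) then w i * τ else 0) := by
            refine Finset.sum_congr rfl fun i _ => ?_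
            split_ifs <;> simp
        _ = ∑ i ∈ univ.filter (fun i : Fin n => (i₀ : ℕ) ≤ (i : ℕ)), w i * τ :=
            (Finset.sum_filter _ _).symm
        _ = (∑ i ∈ univ.filter (fun i : Fin n => (i₀ : ℕ) ≤ (i : ℕ)), w i) * τ :=
            (Finset.sum_mul _ _ _).symm
        _ = W i₀ * τ := rfl
    rw [this, hτdef, mul_inv_cancel₀ (hWpos i₀).ne']
  have hdot : ∑ j, xx j * y j = M := by
    rw [← Equiv.sum_comp σ (fun j => xx j * y j)]
    have hterm : ∀ k : Fin n,
        xx (σ k) * y (σ k) = (if (i₀ : ℕ) ≤ (k : ℕ) then τ * s k else 0) := by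
      intro k
      simp only [hxx]
      rw [Equiv.symm_apply_apply]
      by_cases h : (i₀ : ℕ) ≤ (k : ℕ)
      · rw [if_pos h, if_pos h]
        have hsk : s k = |y (σ k)| := rfl
        by_cases hy : y (σ k) < 0
        · rw [if_pos hy, hsk, abs_of_neg hy]; ring
        · rw [if_neg hy, hsk, abs_of_nonneg (not_lt.mp hy)]
      · rw [if_neg h, if_neg h, zero_mul]
    calc ∑ k : Fin n, xx (σ k) * y (σ k)
        = ∑ k : Fin n, (if (i₀ : ℕ) ≤ (k : ℕ) then τ * s k else 0) :=
          Finset.sum_congr rfl fun k _ => hterm k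
      _ = ∑ k ∈ univ.filter (fun k : Fin n => (i₀ : ℕ) ≤ (k : ℕ)), τ * s k :=
          (Finset.sum_filter _ _).symm
      _ = τ * S i₀ := by rw [← Finset.mul_sum]
      _ = M := rfl
  have hMmem : M ∈ {r : ℝ | ∃ x : Fin n → ℝ, owl w x ≤ 1 ∧ r = ∑ i, x i * y i} :=
    ⟨xx, howlxx, hdot.symm⟩
  refine le_antisymm (csSup_le ⟨0, h0mem⟩ hub) (le_csSup ⟨M, hub⟩ hMmem)
end

section
/- Let the scaled ES-norm on ℝⁿ be the scaled generalized-ES norm with the identity distortion g(u) = u, i.e., ⟨⟨x⟩⟩_α^{S} = inf_{t∈ℝ} { t + (1/(n(1−α))) Σ_{i=1}^n (|x_i| − t)_+ }. Then for every α ∈ [0, (n−1)/n], its dual norm is ⟨⟨x⟩⟩_α^{S,*} = max{ ‖x‖₁, n(1−α) ‖x‖_∞ } for all x ∈ ℝⁿ, where ‖x‖₁ = Σ_{i=1}^n |x_i| and ‖x‖_∞ = max_{1≤i≤n} |x_i|. Consequently, the dual of the non-scaled ES-norm ⟨⟨x⟩⟩_α = n(1−α)⟨⟨x⟩⟩_α^{S}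 is max{ ‖x‖_∞, ‖x‖₁/(n(1−α)) }. -/
open Finset

/-- The scaled ES-norm (identity distortion `g(u) = u`):
`⟨⟨x⟩⟩_α^S = inf_t { t + (1/(n(1-α))) ∑ᵢ (|xᵢ| - t)₊ }`. -/
noncomputable def esS (n : ℕ) (α : ℝ) (x : Fin n → ℝ) : ℝ :=
  ⨅ t : ℝ, (t + ((n : ℝ) * (1 - α))⁻¹ * ∑ i, max (|x i| - t) 0)


private lemma esS_dual_key (n : ℕ) (hn : 1 ≤ n) (β : ℝ) (hβ1 : 1 ≤ β) (hβn : β ≤ (n : ℝ))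
    (y : Fin n → ℝ) (c : ℝ) (hc : 0 < c) :
    sSup {r : ℝ | ∃ x : Fin n → ℝ,
        (⨅ t : ℝ, (t + β⁻¹ * ∑ i, max (|x i| - t) 0)) ≤ c ∧ r = ∑ i, x i * y i}
      = c * max (∑ i, |y i|) (β * ⨆ i, |y i|) := by
  have hβpos : (0:ℝ) < β := lt_of_lt_of_le one_pos hβ1
  have hβinv : (0:ℝ) ≤ β⁻¹ := by positivity
  haveI : Nonempty (Fin n) := ⟨⟨0, hn⟩⟩
  set S := ⨆ i, |y i| with hSdef
  have hbdd : BddAbove (Set.range fun i => |y i|) := Finite.bddAbove_range _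
  have hSle : ∀ i, |y i| ≤ S := fun i => le_ciSup hbdd i
  obtain ⟨i₀, hi₀⟩ := Finite.exists_max fun i : Fin n => |y i|
  have hSeq : S = |y i₀| := le_antisymm (ciSup_le hi₀) (le_ciSup hbdd i₀)
  have hS0 : 0 ≤ S := hSeq ▸ abs_nonneg _
  set A := ∑ i, |y i| with hAdef
  have hA0 : 0 ≤ A := Finset.sum_nonneg fun i _ => abs_nonneg _
  set M := max A (β * S) with hMdef
  have hM0 : 0 ≤ M := hA0.trans (le_max_left _ _)
  have hAM : A ≤ M := le_max_left _ _
  have hSM : β * S ≤ M := le_max_right _ _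
  have h5 : (1:ℝ) ≤ β⁻¹ * n := by
    rw [inv_mul_eq_div, le_div_iff₀ hβpos]; linarith
  -- objective nonneg
  have hobj0 : ∀ (x : Fin n → ℝ) (t : ℝ), 0 ≤ t + β⁻¹ * ∑ i, max (|x i| - t) 0 := by
    intro x t
    rcases le_or_gt 0 t with ht | ht
    · have h1 : 0 ≤ ∑ i, max (|x i| - t) 0 := Finset.sum_nonneg fun i _ => le_max_right _ _
      nlinarith
    · have h2 : (n:ℝ) * (-t) ≤ ∑ i, max (|x i| - t) 0 := by
        calc (n:ℝ) * (-t) = ∑ _i : Fin n, (-t) := by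
              simp [Finset.sum_const, Finset.card_univ, mul_comm]
          _ ≤ _ := Finset.sum_le_sum fun i _ =>
              le_trans (by linarith [abs_nonneg (x i)]) (le_max_left _ _)
      have h3 : β⁻¹ * ((n:ℝ) * (-t)) ≤ β⁻¹ * ∑ i, max (|x i| - t) 0 :=
        mul_le_mul_of_nonneg_left h2 hβinv
      nlinarith
  have hbb : ∀ x : Fin n → ℝ,
      BddBelow (Set.range fun t : ℝ => t + β⁻¹ * ∑ i, max (|x i| - t) 0) :=
    fun x => ⟨0, by rintro r ⟨t, rfl⟩; exact hobj0 x t⟩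
  have hes_le : ∀ (x : Fin n → ℝ) (t : ℝ),
      (⨅ t : ℝ, (t + β⁻¹ * ∑ i, max (|x i| - t) 0)) ≤ t + β⁻¹ * ∑ i, max (|x i| - t) 0 :=
    fun x t => ciInf_le (hbb x) t
  -- Hölder-type bound for nonnegative t
  have hcore : ∀ (x : Fin n → ℝ) (t : ℝ), 0 ≤ t →
      ∑ i, |x i| * |y i| ≤ M * (t + β⁻¹ * ∑ i, max (|x i| - t) 0) := by
    intro x t ht
    have hsum0 : 0 ≤ ∑ i, max (|x i| - t) 0 := Finset.sum_nonneg fun i _ => le_max_right _ _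
    have step1 : ∑ i, |x i| * |y i| ≤ t * A + S * ∑ i, max (|x i| - t) 0 := by
      rw [hAdef, Finset.mul_sum, Finset.mul_sum, ← Finset.sum_add_distrib]
      refine Finset.sum_le_sum fun i _ => ?_
      have h1 : |x i| - t ≤ max (|x i| - t) 0 := le_max_left _ _
      have h2 : (0:ℝ) ≤ max (|x i| - t) 0 := le_max_right _ _
      nlinarith [hSle i, abs_nonneg (y i)]
    have h2 : S * ∑ i, max (|x i| - t) 0 ≤ M * (β⁻¹ * ∑ i, max (|x i| - t) 0) := by
      have h3 := mul_le_mul_of_nonneg_right hSM (mul_nonneg hβinv hsum0)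
      have hid : β * S * (β⁻¹ * ∑ i, max (|x i| - t) 0) = S * ∑ i, max (|x i| - t) 0 := by
        rw [show β * S * (β⁻¹ * ∑ i, max (|x i| - t) 0)
            = (β * β⁻¹) * (S * ∑ i, max (|x i| - t) 0) by ring,
          mul_inv_cancel₀ hβpos.ne', one_mul]
      linarith
    have h4 : t * A ≤ t * M := mul_le_mul_of_nonneg_left hAM ht
    rw [mul_add]
    linarith
  -- full Hölder bound
  have holder : ∀ x : Fin n → ℝ,
      ∑ i, |x i| * |y i| ≤ M * (⨅ t : ℝ, (t + β⁻¹ * ∑ i, max (|x i| - t) 0)) := by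
    intro x
    rcases eq_or_lt_of_le hM0 with hM | hM
    · have h0 := hcore x 0 le_rfl
      rw [← hM, zero_mul] at h0 ⊢
      exact h0
    · have hle : (∑ i, |x i| * |y i|) / M ≤ ⨅ t : ℝ, (t + β⁻¹ * ∑ i, max (|x i| - t) 0) := by
        refine le_ciInf fun t => ?_
        rcases le_or_gt 0 t with ht | ht
        · rw [div_le_iff₀ hM]
          have := hcore x t ht
          linarith
        · have h0 := hcore x 0 le_rfl
          have hmono : (0:ℝ) + β⁻¹ * ∑ i, max (|x i| - 0) 0
              ≤ t + β⁻¹ * ∑ i, max (|x i| - t) 0 := by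
            have e1 : ∀ i : Fin n, max (|x i| - t) 0 = |x i| - t :=
              fun i => max_eq_left (by linarith [abs_nonneg (x i)])
            have e2 : ∀ i : Fin n, max (|x i| - 0) 0 = |x i| :=
              fun i => by rw [sub_zero]; exact max_eq_left (abs_nonneg _)
            simp only [e1, e2, Finset.sum_sub_distrib, Finset.sum_const, card_univ,
              Fintype.card_fin, nsmul_eq_mul]
            have : β⁻¹ * ((n:ℝ) * (-t)) ≥ -t := by nlinarith
            rw [mul_sub]
            linarith
          rw [div_le_iff₀ hM]
          have := hmono
          nlinarith
      have := mul_le_mul_of_nonneg_left hle hM0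
      rw [mul_div_cancel₀ _ hM.ne'] at this
      exact this
  set E : Set ℝ := {r : ℝ | ∃ x : Fin n → ℝ,
      (⨅ t : ℝ, (t + β⁻¹ * ∑ i, max (|x i| - t) 0)) ≤ c ∧ r = ∑ i, x i * y i} with hEdef
  -- membership 1
  have mem1 : c * A ∈ E := by
    refine ⟨fun i => c * (if y i < 0 then -1 else 1), ?_, ?_⟩
    · refine le_trans (hes_le _ c) ?_
      have habs : ∀ i : Fin n, |c * (if y i < 0 then -1 else 1)| = c := by
        intro i; split
        · rw [mul_neg_one, abs_neg, abs_of_pos hc]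
        · rw [mul_one, abs_of_pos hc]
      have hsum : ∑ i, max (|c * (if y i < 0 then -1 else 1)| - c) 0 = 0 :=
        Finset.sum_eq_zero fun i _ => by rw [habs i, sub_self, max_self]
      rw [hsum, mul_zero, add_zero]
    · rw [hAdef, Finset.mul_sum]
      refine Finset.sum_congr rfl fun i _ => ?_
      by_cases h : y i < 0
      · simp only [h, if_true]; rw [abs_of_neg h]; ring
      · simp only [h, if_false]; rw [abs_of_nonneg (not_lt.mp h)]; ring
  -- membership 2
  have mem2 : c * (β * S) ∈ E := by
    set v : ℝ := c * β * (if y i₀ < 0 then -1 else 1) with hvdef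
    have hvabs : |v| = c * β := by
      rw [hvdef]; split
      · rw [mul_neg_one, abs_neg, abs_of_pos (by positivity)]
      · rw [mul_one, abs_of_pos (by positivity)]
    refine ⟨fun i => if i = i₀ then v else 0, ?_, ?_⟩
    · refine le_trans (hes_le _ 0) ?_
      have habs : ∀ i : Fin n, max (|(if i = i₀ then v else 0)| - 0) 0
          = if i = i₀ then c * β else 0 := by
        intro i; split
        · rw [sub_zero, hvabs]; exact max_eq_left (by positivity)
        · simp
      rw [Finset.sum_congr rfl fun i _ => habs i, Finset.sum_ite_eq' univ i₀ fun _ => c * β]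
      simp only [mem_univ, if_true]
      rw [show (0:ℝ) + β⁻¹ * (c * β) = β⁻¹ * β * c by ring, inv_mul_cancel₀ hβpos.ne', one_mul]
    · have : ∑ i, (if i = i₀ then v else 0) * y i = v * y i₀ := by
        rw [Finset.sum_congr rfl (fun i _ => by rw [ite_mul, zero_mul]),
          Finset.sum_ite_eq' univ i₀ fun i => v * y i]
        simp
      rw [this, hSeq, hvdef]
      split
      · rename_i h; rw [abs_of_neg h]; ring
      · rename_i h; rw [abs_of_nonneg (not_lt.mp h)]; ring
  -- upper bound
  have hub : ∀ r ∈ E, r ≤ c * M := by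
    rintro r ⟨x, hx, rfl⟩
    have h1 : ∑ i, x i * y i ≤ ∑ i, |x i| * |y i| :=
      Finset.sum_le_sum fun i _ => by rw [← abs_mul]; exact le_abs_self _
    have h2 := holder x
    have h3 := mul_le_mul_of_nonneg_left hx hM0
    nlinarith
  have hbddE : BddAbove E := ⟨c * M, hub⟩
  refine le_antisymm (csSup_le ⟨c * A, mem1⟩ hub) ?_
  rw [hMdef, mul_max_of_nonneg _ _ hc.le]
  exact max_le (le_csSup hbddE mem1) (le_csSup hbddE mem2)

/-- for `α ∈ [0, (n-1)/n]`, the dual of the scaled ES-norm is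
`max{‖x‖₁, n(1-α)‖x‖_∞}`, and consequently the dual of the non-scaled ES-norm
`n(1-α)⟨⟨·⟩⟩_α^S` is `max{‖x‖_∞, ‖x‖₁/(n(1-α))}`. -/
theorem stmt19 (n : ℕ) (hn : 1 ≤ n) (α : ℝ)
    (hα1 : 0 ≤ α) (hα2 : α ≤ ((n : ℝ) - 1) / n) (x : Fin n → ℝ) :
    dualNorm (esS n α) x = max (∑ i, |x i|) ((n : ℝ) * (1 - α) * ⨆ i, |x i|) ∧
      dualNorm (fun y => (n : ℝ) * (1 - α) * esS n α y) x
        = max (⨆ i, |x i|) ((∑ i, |x i|) / ((n : ℝ) * (1 - α))) := by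
  have hn0 : (0:ℝ) < n := by exact_mod_cast hn
  have hβ1 : (1:ℝ) ≤ (n : ℝ) * (1 - α) := by
    have h := (le_div_iff₀ hn0).mp hα2
    nlinarith
  have hβn : (n : ℝ) * (1 - α) ≤ (n : ℝ) := by nlinarith
  have hβpos : (0:ℝ) < (n : ℝ) * (1 - α) := lt_of_lt_of_le one_pos hβ1
  constructor
  · have h := esS_dual_key n hn ((n : ℝ) * (1 - α)) hβ1 hβn x 1 one_pos
    rw [one_mul] at h
    unfold dualNorm esS
    exact h
  · have h := esS_dual_key n hn ((n : ℝ) * (1 - α)) hβ1 hβn x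
      (((n : ℝ) * (1 - α))⁻¹) (by positivity)
    unfold dualNorm esS
    have hset : {r : ℝ | ∃ z : Fin n → ℝ,
          (n : ℝ) * (1 - α) * (⨅ t : ℝ, (t + ((n : ℝ) * (1 - α))⁻¹ * ∑ i, max (|z i| - t) 0)) ≤ 1
          ∧ r = ∑ i, z i * x i}
        = {r : ℝ | ∃ z : Fin n → ℝ,
          (⨅ t : ℝ, (t + ((n : ℝ) * (1 - α))⁻¹ * ∑ i, max (|z i| - t) 0)) ≤ ((n : ℝ) * (1 - α))⁻¹
          ∧ r = ∑ i, z i * x i} := by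
      ext r
      constructor <;> rintro ⟨z, hz, rfl⟩ <;> refine ⟨z, ?_, rfl⟩
      · rw [← le_div_iff₀' hβpos, one_div] at hz; exact hz
      · rw [← le_div_iff₀' hβpos, one_div]; exact hz
    rw [hset, h, mul_max_of_nonneg _ _ (inv_nonneg.mpr hβpos.le),
      inv_mul_cancel_left₀ hβpos.ne', max_comm, inv_mul_eq_div]
end
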